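/- Let K be an inner model of ZFC + GCH with the weak covering property at a strong limit singular cardinal λ of countable cofinality ((λ⁺)^K = λ⁺), and suppose K has a definable well-ordering ≤_K of λ→2 ∩ K. Then the set A_K = {x ∈ WO_λ ∩ K : ∀y ∈ K ((λ,∈_x) ≅ (λ,∈_y) → x ≤_K y)} (the ≤_K-minimal codes, computed in K) has cardinality λ⁺ in V and fails the λ-PSP in V. -/

import Mathlib

universe u
open Cardinal

/-- The canonical type of order type `λ` representing the cardinal `λ` as a set of "ordinals". -/
abbrev T (lam : Cardinal.{u}) : Type u := lam.ord.ToType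

/-- The binary relation on `λ` coded by `z : λ → 2` via the pairing bijection `pair`:
`(a, b) ∈ E_z` iff `z ⟨a,b⟩ = 0` (we use `false` for `0`). -/
def Ez {lam : Cardinal.{u}} (pair : T lam × T lam ≃ T lam) (z : T lam → Bool)
    (a b : T lam) : Prop := z (pair (a, b)) = false

/-- `z` codes a well-order of order type `α`: the relation `E_z` only relates elements of a set
`S` (its field), and restricted to `S` it is a well-order of order type `α`. -/
def codesWO {lam : Cardinal.{u}} (pair : T lam × T lam ≃ T lam) (z : T lam → Bool)
    (α : Ordinal.{u}) : Prop :=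
  ∃ S : Set (T lam), (∀ a b : T lam, Ez pair z a b → a ∈ S ∧ b ∈ S) ∧
    ∃ hwo : IsWellOrder S (fun a b : S => Ez pair z a.1 b.1),
      @Ordinal.type S (fun a b : S => Ez pair z a.1 b.1) hwo = α

/-- The bounded topology on the generalised Cantor space `λ → 2`: basic open sets are
determined by fixing the values on a bounded (initial) segment of `λ`. -/
def btop (lam : Cardinal.{u}) : TopologicalSpace (T lam → Bool) :=
  TopologicalSpace.generateFrom
    {V | ∃ (b : T lam) (s : T lam → Bool), V = {x | ∀ a : T lam, a < b → x a = s a}}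

/-- `A` is a λ-analytic subset of `λ → 2`: it is a continuous image of a λ-Polish space,
i.e. of a completely metrizable space of weight `≤ λ`. -/
def IsLamAnalytic (lam : Cardinal.{u}) (A : Set (T lam → Bool)) : Prop :=
  ∃ (Y : Type u) (tY : TopologicalSpace Y) (m : MetricSpace Y),
    m.toUniformSpace.toTopologicalSpace = tY ∧ @CompleteSpace Y m.toUniformSpace ∧
    (∃ B : Set (Set Y), @TopologicalSpace.IsTopologicalBasis Y tY B ∧ #B ≤ lam) ∧
    ∃ f : Y → (T lam → Bool), @Continuous Y _ tY (btop lam) f ∧ Set.range f = A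

/-- `f` is a topological embedding from `(X, τX)` to `(Y, τY)`:
injective, continuous, and inducing (every open set is the preimage of an open set). -/
def IsTopEmb {X Y : Type u} (τX : TopologicalSpace X) (τY : TopologicalSpace Y)
    (f : X → Y) : Prop :=
  Function.Injective f ∧ @Continuous X Y τX τY f ∧
    ∀ U : Set X, @IsOpen X τX U → ∃ V : Set Y, @IsOpen Y τY V ∧ f ⁻¹' V = U

/-
The `≤_K`-minimal codes form a set `A` containing exactly one code of each order type it
meets, and it meets all types `2 + α`, `α < λ⁺` (types `0` and `1` share their codes), so
`|A| = λ⁺`. If `λ → 2` embedded continuously into `A`, its image would be a λ-analytic set of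
codes, hence by the Boundedness Lemma its order types would lie below some `β < λ⁺`; injectivity
of the type map on `A` would then give `2^λ ≤ |β + 1| ≤ λ`, contradicting Cantor's theorem.
-/

open Function Ordinal

section Codes

variable {lam : Cardinal.{u}} {pair : T lam × T lam ≃ T lam}

lemma mk_T (lam : Cardinal.{u}) : #(T lam) = lam := by
  rw [mk_toType, card_ord]

lemma codesWO.card_le {z : T lam → Bool} {α : Ordinal.{u}} (h : codesWO pair z α) :
    α.card ≤ lam := by
  obtain ⟨S, -, hwo, rfl⟩ := h
  rw [card_type]
  exact (mk_set_le S).trans_eq (mk_T lam)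

lemma codesWO.lt_ord_succ {z : T lam → Bool} {α : Ordinal.{u}} (h : codesWO pair z α) :
    α < (Order.succ lam).ord :=
  lt_ord.2 (Order.lt_succ_iff.2 h.card_le)

lemma codesWO.exists_ez_of_two_le {z : T lam → Bool} {α : Ordinal.{u}}
    (h : codesWO pair z α) (h2 : 2 ≤ α) : ∃ a b, Ez pair z a b := by
  obtain ⟨S, -, hwo, rfl⟩ := h
  have : Nontrivial S := by
    refine one_lt_iff_nontrivial.1 (Cardinal.one_lt_two.trans_le ?_)
    simpa using card_le_card h2
  obtain ⟨a, b, hab⟩ := exists_pair_ne S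
  rcases trichotomous_of (fun a b : S => Ez pair z a.1 b.1) a b with h | h | h
  · exact ⟨_, _, h⟩
  · exact absurd h hab
  · exact ⟨_, _, h⟩

lemma eq_field_of_ez {z : T lam → Bool} {S : Set (T lam)}
    (hS : ∀ a b, Ez pair z a b → a ∈ S ∧ b ∈ S)
    (hwo : IsWellOrder S (fun a b : S => Ez pair z a.1 b.1)) {a b : T lam}
    (hab : Ez pair z a b) :
    S = {c | ∃ d, Ez pair z c d ∨ Ez pair z d c} := by
  ext c
  refine ⟨fun hc => ?_, ?_⟩
  · rcases trichotomous_of (fun a b : S => Ez pair z a.1 b.1) ⟨c, hc⟩ ⟨a, (hS a b hab).1⟩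
      with h | h | h
    · exact ⟨a, Or.inl h⟩
    · exact ⟨b, Or.inl (by rwa [show c = a from congrArg Subtype.val h])⟩
    · exact ⟨a, Or.inr h⟩
  · rintro ⟨d, hd | hd⟩
    exacts [(hS c d hd).1, (hS d c hd).2]

lemma codesWO.eq_of_two_le {z : T lam → Bool} {α β : Ordinal.{u}}
    (hα : codesWO pair z α) (hβ : codesWO pair z β) (h2 : 2 ≤ α) : α = β := by
  obtain ⟨a, b, hab⟩ := hα.exists_ez_of_two_le h2
  obtain ⟨S, hS, hwo, rfl⟩ := hα
  obtain ⟨S', hS', hwo', rfl⟩ := hβ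
  obtain rfl : S = S' := (eq_field_of_ez hS hwo hab).trans (eq_field_of_ez hS' hwo' hab).symm
  rfl

lemma mk_le_card_of_codesWO {B : Set (T lam → Bool)} {o : Ordinal.{u}}
    (hcode : ∀ z ∈ B, ∃ α < o, codesWO pair z α)
    (hinj : ∀ ⦃x⦄, x ∈ B → ∀ ⦃y⦄, y ∈ B → ∀ ⦃α⦄, codesWO pair x α → codesWO pair y α → x = y) :
    #B ≤ o.card := by
  choose g hgo hg using fun z : B => hcode z z.2
  have hmk : Injective fun z : B => ToType.mk ⟨g z, hgo z⟩ := by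
    intro x y hxy
    have hgxy : g x = g y := congrArg Subtype.val (ToType.mk.injective hxy)
    exact Subtype.ext (hinj x.2 y.2 (hg x) (hgxy ▸ hg y))
  simpa using mk_le_of_injective hmk

lemma card_le_mk_of_codesWO {B : Set (T lam → Bool)} {o : Ordinal.{u}}
    (hcode : ∀ α < o, ∃ z ∈ B, codesWO pair z (2 + α)) :
    o.card ≤ #B := by
  choose h hB hh using fun a : o.ToType => hcode (ToType.mk.symm a).1 (ToType.mk.symm a).2
  have hmk : Injective fun a => (⟨h a, hB a⟩ : B) := by
    intro a b hab
    have hab' : h a = h b := congrArg Subtype.val hab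
    have h2 := (hh a).eq_of_two_le (hab' ▸ hh b) le_self_add
    exact ToType.mk.symm.injective (Subtype.ext (add_left_cancel h2))
  simpa using mk_le_of_injective hmk

end Codes

section MinimalCodes

variable {lam : Cardinal.{u}} (pair : T lam × T lam ≃ T lam) (K2 : Set (T lam → Bool))
  (leK : (T lam → Bool) → (T lam → Bool) → Prop)

def minimalCodes : Set (T lam → Bool) :=
  {x | x ∈ K2 ∧ (∃ α : Ordinal.{u}, codesWO pair x α) ∧
    ∀ y ∈ K2, (∃ α : Ordinal.{u}, codesWO pair x α ∧ codesWO pair y α) → leK x y}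

variable {pair K2 leK}

lemma eq_of_mem_minimalCodes (hanti : ∀ x y, leK x y → leK y x → x = y)
    {x y : T lam → Bool} (hx : x ∈ minimalCodes pair K2 leK) (hy : y ∈ minimalCodes pair K2 leK)
    {α : Ordinal.{u}} (hxα : codesWO pair x α) (hyα : codesWO pair y α) : x = y :=
  hanti x y (hx.2.2 y hy.1 ⟨α, hxα, hyα⟩) (hy.2.2 x hx.1 ⟨α, hyα, hxα⟩)

lemma exists_mem_minimalCodes (htot : ∀ x ∈ K2, ∀ y ∈ K2, leK x y ∨ leK y x)
    (hwf : Set.WellFoundedOn K2 (fun x y => leK x y ∧ x ≠ y))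
    {z : T lam → Bool} {α : Ordinal.{u}} (hz : z ∈ K2) (hzα : codesWO pair z α) (h2 : 2 ≤ α) :
    ∃ x ∈ minimalCodes pair K2 leK, codesWO pair x α := by
  obtain ⟨m, -, hmin⟩ := (hwf.subset fun x (hx : x ∈ K2 ∧ codesWO pair x α) => hx.1).has_min
    Set.univ ⟨⟨z, hz, hzα⟩, trivial⟩
  refine ⟨m, ⟨m.2.1, ⟨α, m.2.2⟩, ?_⟩, m.2.2⟩
  rintro y hy ⟨β, hmβ, hyβ⟩
  have hyα : codesWO pair y α := (m.2.2.eq_of_two_le hmβ h2).symm ▸ hyβ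
  rcases htot m m.2.1 y hy with h | h
  · exact h
  · by_cases hym : y = m
    · exact hym ▸ h
    · exact absurd ⟨h, hym⟩ (hmin ⟨y, hy, hyα⟩ trivial)

end MinimalCodes

theorem minimal_codes_fail_PSP_general (lam : Cardinal.{u})
    (hstr : lam.IsStrongLimit)
    (pair : T lam × T lam ≃ T lam)
    (K2 : Set (T lam → Bool)) (leK : (T lam → Bool) → (T lam → Bool) → Prop)
    (htot : ∀ x ∈ K2, ∀ y ∈ K2, leK x y ∨ leK y x)
    (hanti : ∀ x y : T lam → Bool, leK x y → leK y x → x = y)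
    (hwf : Set.WellFoundedOn K2 (fun x y => leK x y ∧ x ≠ y))
    (hcodes : ∀ α : Ordinal.{u}, α < (Order.succ lam).ord → ∃ z ∈ K2, codesWO pair z α)
    (hBound : ∀ B : Set (T lam → Bool), IsLamAnalytic lam B →
      (∀ z ∈ B, ∃ α : Ordinal.{u}, codesWO pair z α) →
      ∃ β : Ordinal.{u}, β < (Order.succ lam).ord ∧
        ∀ z ∈ B, ∀ α : Ordinal.{u}, codesWO pair z α → α ≤ β)
    (hImg : ∀ f : (T lam → Bool) → (T lam → Bool),
      @Continuous _ _ (btop lam) (btop lam) f → Function.Injective f →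
      IsLamAnalytic lam (Set.range f)) :
    #{x : T lam → Bool | x ∈ K2 ∧ (∃ α : Ordinal.{u}, codesWO pair x α) ∧
        ∀ y ∈ K2, (∃ α : Ordinal.{u}, codesWO pair x α ∧ codesWO pair y α) → leK x y}
      = Order.succ lam ∧
    ¬ ∃ f : (T lam → Bool) → (T lam → Bool), IsTopEmb (btop lam) (btop lam) f ∧
      Set.range f ⊆ {x : T lam → Bool | x ∈ K2 ∧ (∃ α : Ordinal.{u}, codesWO pair x α) ∧
        ∀ y ∈ K2, (∃ α : Ordinal.{u}, codesWO pair x α ∧ codesWO pair y α) → leK x y} := by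
  change #(minimalCodes pair K2 leK) = _ ∧
    ¬ ∃ f, IsTopEmb _ _ f ∧ Set.range f ⊆ minimalCodes pair K2 leK
  have hsucc : ℵ₀ ≤ Order.succ lam := hstr.aleph0_le.trans (Order.le_succ lam)
  have htypes : ∀ α < (Order.succ lam).ord, ∃ z ∈ minimalCodes pair K2 leK,
      codesWO pair z (2 + α) := fun α hα => by
    have h2 : (2 : Ordinal) < (Order.succ lam).ord := (isSuccLimit_ord hsucc).natCast_lt 2
    obtain ⟨z, hz, hzα⟩ := hcodes _ (isPrincipal_add_ord hsucc h2 hα)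
    exact exists_mem_minimalCodes htot hwf hz hzα le_self_add
  refine ⟨le_antisymm ?_ (by simpa using card_le_mk_of_codesWO htypes), ?_⟩
  · simpa using mk_le_card_of_codesWO
      (fun z hz => hz.2.1.elim fun α hα => ⟨α, hα.lt_ord_succ, hα⟩)
      fun _ hx _ hy _ => eq_of_mem_minimalCodes hanti hx hy
  rintro ⟨f, ⟨hinj, hcont, -⟩, hsub⟩
  obtain ⟨β, hβ, hβmax⟩ := hBound _ (hImg f hcont hinj) fun z hz => (hsub hz).2.1
  have hrange : #(Set.range f) ≤ (Order.succ β).card :=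
    mk_le_card_of_codesWO (fun z hz => (hsub hz).2.1.elim fun α hα =>
      ⟨α, Order.lt_succ_iff.2 (hβmax z hz α hα), hα⟩)
      fun _ hx _ hy _ => eq_of_mem_minimalCodes hanti (hsub hx) (hsub hy)
  have hsuccβ : (Order.succ β).card ≤ lam :=
    Order.lt_succ_iff.1 (lt_ord.1 ((isSuccLimit_ord hsucc).succ_lt hβ))
  rw [mk_range_eq f hinj, mk_arrow, mk_T] at hrange
  exact (cantor lam).not_ge (by simpa using hrange.trans hsuccβ)

/-- Let `K` be an inner model of ZFC + GCH with the weak covering property at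
a strong limit singular `λ` of countable cofinality (so `(λ⁺)^K = λ⁺`, built into the
hypothesis `hcodes` which says that `K` has codes for every `α < λ⁺`), carrying a definable
well-ordering `≤_K` of its `λ`-reals `K2`.  Then the set `A_K` of `≤_K`-minimal codes has
cardinality `λ⁺` in `V` and fails the λ-PSP in `V`. -/
theorem minimal_codes_fail_PSP (lam : Cardinal.{u})
    (hstr : lam.IsStrongLimit) (hcof : lam.ord.cof = ℵ₀)
    (pair : T lam × T lam ≃ T lam)
    (K2 : Set (T lam → Bool)) (leK : (T lam → Bool) → (T lam → Bool) → Prop)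
    (hrefl : ∀ x ∈ K2, leK x x)
    (htot : ∀ x ∈ K2, ∀ y ∈ K2, leK x y ∨ leK y x)
    (hanti : ∀ x y : T lam → Bool, leK x y → leK y x → x = y)
    (hwf : Set.WellFoundedOn K2 (fun x y => leK x y ∧ x ≠ y))
    (hcodes : ∀ α : Ordinal.{u}, α < (Order.succ lam).ord → ∃ z ∈ K2, codesWO pair z α)
    (hBound : ∀ B : Set (T lam → Bool), IsLamAnalytic lam B →
      (∀ z ∈ B, ∃ α : Ordinal.{u}, codesWO pair z α) →
      ∃ β : Ordinal.{u}, β < (Order.succ lam).ord ∧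
        ∀ z ∈ B, ∀ α : Ordinal.{u}, codesWO pair z α → α ≤ β)
    (hImg : ∀ f : (T lam → Bool) → (T lam → Bool),
      @Continuous _ _ (btop lam) (btop lam) f → Function.Injective f →
      IsLamAnalytic lam (Set.range f)) :
    #{x : T lam → Bool | x ∈ K2 ∧ (∃ α : Ordinal.{u}, codesWO pair x α) ∧
        ∀ y ∈ K2, (∃ α : Ordinal.{u}, codesWO pair x α ∧ codesWO pair y α) → leK x y}
      = Order.succ lam ∧
    ¬ ∃ f : (T lam → Bool) → (T lam → Bool), IsTopEmb (btop lam) (btop lam) f ∧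
      Set.range f ⊆ {x : T lam → Bool | x ∈ K2 ∧ (∃ α : Ordinal.{u}, codesWO pair x α) ∧
        ∀ y ∈ K2, (∃ α : Ordinal.{u}, codesWO pair x α ∧ codesWO pair y α) → leK x y} :=
  minimal_codes_fail_PSP_general lam hstr pair K2 leK htot hanti hwf hcodes hBound hImg
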